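/- arXiv:1912.01433 — 2 statements merged into one kernel-verified Lean document; each statement's English description precedes it below -/
import Mathlib

section
/- Let J = J(D, λ) be a first Tits construction. For a, b, c ∈ D× with N_D(a) = N_D(b)N_D(c) and γ ∈ k×, the map (x,y,z) ↦ γ(axb, b^# y c, c^{-1} z a^#) is a norm similarity: N(ψ((x,y,z))) = γ³ N_D(a)N_D(b) · N((x,y,z)). -/
/-!
The factor `γ` contributes `γ³` because the norm is cubic. For the rest, the determinant terms
pick up `N_D(a) N_D(b)` from `N_D(b^#) = N_D(b)²`, `N_D(a^#) = N_D(a)²` and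
`N_D(a) = N_D(b) N_D(c)`, while in the trace term the middle factors collapse,
`b b^# = N_D(b)` and `c c⁻¹ = 1`, leaving `N_D(b) T_D(a (xyz) a^#) = N_D(b) N_D(a) T_D(xyz)`.
-/

open Matrix

/-- The norm of the first Tits construction `J(D, λ) = D ⊕ D ⊕ D`, with
`D = Mat₃(k)`, `N_D = det`, `T_D = trace`. -/
noncomputable def titsNorm {k : Type*} [Field k] (l : k)
    (v : Matrix (Fin 3) (Fin 3) k × Matrix (Fin 3) (Fin 3) k × Matrix (Fin 3) (Fin 3) k) : k :=
  v.1.det + l * v.2.1.det + l⁻¹ * v.2.2.det - (v.1 * v.2.1 * v.2.2).trace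

namespace Matrix

variable {n R : Type*} [Fintype n] [DecidableEq n] [CommRing R]

theorem trace_mul_mul_adjugate (a m : Matrix n n R) :
    (a * m * a.adjugate).trace = a.det * m.trace := by
  rw [trace_mul_cycle, adjugate_mul, smul_mul, one_mul, trace_smul, smul_eq_mul]

theorem mul_mul_adjugate_mul_mul_nonsing_inv {a b c : Matrix n n R} (hc : IsUnit c.det)
    (x y z : Matrix n n R) :
    (a * x * b) * (b.adjugate * y * c) * (c⁻¹ * z * a.adjugate)
      = b.det • (a * (x * y * z) * a.adjugate) := by
  calc (a * x * b) * (b.adjugate * y * c) * (c⁻¹ * z * a.adjugate)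
      = a * x * (b * b.adjugate) * y * (c * c⁻¹) * z * a.adjugate := by noncomm_ring
    _ = b.det • (a * (x * y * z) * a.adjugate) := by
      rw [mul_adjugate, mul_nonsing_inv c hc]
      simp only [mul_one, Matrix.mul_smul, smul_mul, mul_assoc]

end Matrix

section TitsNorm

variable {k : Type*} [Field k]

theorem titsNorm_smul (l γ : k) (x y z : Matrix (Fin 3) (Fin 3) k) :
    titsNorm l (γ • x, γ • y, γ • z) = γ ^ 3 * titsNorm l (x, y, z) := by
  simp only [titsNorm, det_smul, Fintype.card_fin, smul_mul, Matrix.mul_smul, trace_smul,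
    smul_eq_mul]
  ring

theorem titsNorm_mul_mul_adjugate_mul_mul_inv (l : k) {a b c : Matrix (Fin 3) (Fin 3) k}
    (hc : IsUnit c) (hdet : a.det = b.det * c.det) (x y z : Matrix (Fin 3) (Fin 3) k) :
    titsNorm l (a * x * b, b.adjugate * y * c, c⁻¹ * z * a.adjugate)
      = a.det * b.det * titsNorm l (x, y, z) := by
  have hc' : IsUnit c.det := (isUnit_iff_isUnit_det c).mp hc
  have htrace : ((a * x * b) * (b.adjugate * y * c) * (c⁻¹ * z * a.adjugate)).trace
      = a.det * b.det * (x * y * z).trace := by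
    rw [mul_mul_adjugate_mul_mul_nonsing_inv hc', trace_smul, trace_mul_mul_adjugate,
      smul_eq_mul]
    ring
  simp only [titsNorm, htrace, det_mul, det_adjugate, det_nonsing_inv, Ring.inverse_eq_inv,
    Fintype.card_fin]
  field_simp [hc'.ne_zero]
  rw [hdet]
  ring

end TitsNorm

theorem titsNorm_similarity_general {k : Type*} [Field k] (l : k)
    (a b c : Matrix (Fin 3) (Fin 3) k) (γ : k)
    (hc : IsUnit c)
    (hdet : a.det = b.det * c.det)
    (x y z : Matrix (Fin 3) (Fin 3) k) :
    titsNorm l (γ • (a * x * b), γ • (b.adjugate * y * c), γ • (c⁻¹ * z * a.adjugate))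
      = γ ^ 3 * (a.det * b.det) * titsNorm l (x, y, z) := by
  rw [titsNorm_smul, titsNorm_mul_mul_adjugate_mul_mul_inv l hc hdet, ← mul_assoc]

/-- For `a, b, c ∈ D×` with `N_D(a) = N_D(b) N_D(c)` and `γ ∈ k×`, the map
`(x,y,z) ↦ γ (a x b, b^# y c, c⁻¹ z a^#)` is a norm similarity of `J(D,λ)`
with multiplier `γ³ N_D(a) N_D(b)`. -/
theorem titsNorm_similarity {k : Type*} [Field k] (l : k) (hl : l ≠ 0)
    (a b c : Matrix (Fin 3) (Fin 3) k) (γ : k) (hγ : γ ≠ 0)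
    (ha : IsUnit a) (hb : IsUnit b) (hc : IsUnit c)
    (hdet : a.det = b.det * c.det)
    (x y z : Matrix (Fin 3) (Fin 3) k) :
    titsNorm l (γ • (a * x * b), γ • (b.adjugate * y * c), γ • (c⁻¹ * z * a.adjugate))
      = γ ^ 3 * (a.det * b.det) * titsNorm l (x, y, z) :=
  titsNorm_similarity_general l a b c γ hc hdet x y z
end

section
/- In the first Tits construction J(D,λ), for p ∈ D× with N_D(p) = 1, the map J_p : (x,y,z) ↦ (x, yp, p^{-1}z) preserves the norm N and fixes the identity element (1,0,0); hence it is an automorphism of the cubic norm structure. -/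
open Matrix

/-- The adjoint of the first Tits construction:
`(x,y,z)^# = (x^# − yz, λ⁻¹ z^# − xy, λ y^# − zx)`. -/
noncomputable def titsSharp {k : Type*} [Field k] (l : k)
    (v : Matrix (Fin 3) (Fin 3) k × Matrix (Fin 3) (Fin 3) k × Matrix (Fin 3) (Fin 3) k) :
    Matrix (Fin 3) (Fin 3) k × Matrix (Fin 3) (Fin 3) k × Matrix (Fin 3) (Fin 3) k :=
  (v.1.adjugate - v.2.1 * v.2.2, l⁻¹ • v.2.2.adjugate - v.1 * v.2.1,
    l • v.2.1.adjugate - v.2.2 * v.1)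

namespace Matrix

variable {n R : Type*} [Fintype n] [DecidableEq n] [CommRing R] {p : Matrix n n R}

theorem adjugate_eq_nonsing_inv_of_det_eq_one (hp : p.det = 1) : p.adjugate = p⁻¹ := by
  rw [inv_def, hp, Ring.inverse_one, one_smul]

theorem det_nonsing_inv_of_det_eq_one (hp : p.det = 1) : p⁻¹.det = 1 := by
  rw [det_nonsing_inv, hp, Ring.inverse_one]

theorem adjugate_nonsing_inv_of_det_eq_one (hp : p.det = 1) : p⁻¹.adjugate = p := by
  rw [adjugate_eq_nonsing_inv_of_det_eq_one (det_nonsing_inv_of_det_eq_one hp),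
    nonsing_inv_nonsing_inv p (by simp [hp])]

theorem mul_mul_nonsing_inv_mul_cancel {m o : Type*} (x : Matrix m n R) (z : Matrix n o R)
    (hp : IsUnit p.det) :
    x * p * (p⁻¹ * z) = x * z := by
  rw [← Matrix.mul_assoc, mul_nonsing_inv_cancel_right p x hp]

end Matrix

noncomputable def titsJ {k : Type*} [Field k] (p : Matrix (Fin 3) (Fin 3) k)
    (v : Matrix (Fin 3) (Fin 3) k × Matrix (Fin 3) (Fin 3) k × Matrix (Fin 3) (Fin 3) k) :
    Matrix (Fin 3) (Fin 3) k × Matrix (Fin 3) (Fin 3) k × Matrix (Fin 3) (Fin 3) k :=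
  (v.1, v.2.1 * p, p⁻¹ * v.2.2)

theorem titsJ_one_zero_zero {k : Type*} [Field k] (p : Matrix (Fin 3) (Fin 3) k) :
    titsJ p (1, 0, 0) = (1, 0, 0) := by
  simp [titsJ]

section TitsJ

variable {k : Type*} [Field k] (l : k) {p : Matrix (Fin 3) (Fin 3) k}

theorem titsNorm_titsJ (hp : p.det = 1)
    (v : Matrix (Fin 3) (Fin 3) k × Matrix (Fin 3) (Fin 3) k × Matrix (Fin 3) (Fin 3) k) :
    titsNorm l (titsJ p v) = titsNorm l v := by
  obtain ⟨x, y, z⟩ := v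
  have hpu : IsUnit p.det := by simp [hp]
  simp only [titsNorm, titsJ, det_mul, hp, det_nonsing_inv_of_det_eq_one hp, mul_one, one_mul,
    ← Matrix.mul_assoc x y p, mul_mul_nonsing_inv_mul_cancel _ _ hpu]

-- `(ab)^# = b^# a^#` together with `p^# = p⁻¹` and `(p⁻¹)^# = p` for `det p = 1`.
theorem titsSharp_titsJ (hp : p.det = 1)
    (v : Matrix (Fin 3) (Fin 3) k × Matrix (Fin 3) (Fin 3) k × Matrix (Fin 3) (Fin 3) k) :
    titsSharp l (titsJ p v) = titsJ p (titsSharp l v) := by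
  obtain ⟨x, y, z⟩ := v
  have hpu : IsUnit p.det := by simp [hp]
  simp only [titsSharp, titsJ, adjugate_mul_distrib, adjugate_eq_nonsing_inv_of_det_eq_one hp,
    adjugate_nonsing_inv_of_det_eq_one hp, mul_mul_nonsing_inv_mul_cancel _ _ hpu,
    sub_mul, mul_sub, smul_mul_assoc, mul_smul_comm, Matrix.mul_assoc]

end TitsJ

theorem titsJ_p_automorphism_general {k : Type*} [Field k] (l : k)
    (p : Matrix (Fin 3) (Fin 3) k) (hp : p.det = 1) :
    (∀ x y z : Matrix (Fin 3) (Fin 3) k,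
        titsNorm l (x, y * p, p⁻¹ * z) = titsNorm l (x, y, z)) ∧
    ((fun v : Matrix (Fin 3) (Fin 3) k × Matrix (Fin 3) (Fin 3) k × Matrix (Fin 3) (Fin 3) k =>
        (v.1, v.2.1 * p, p⁻¹ * v.2.2)) (1, 0, 0) = (1, 0, 0)) ∧
    (∀ x y z : Matrix (Fin 3) (Fin 3) k,
        titsSharp l (x, y * p, p⁻¹ * z)
          = (fun v : Matrix (Fin 3) (Fin 3) k × Matrix (Fin 3) (Fin 3) k × Matrix (Fin 3) (Fin 3) k =>
              (v.1, v.2.1 * p, p⁻¹ * v.2.2)) (titsSharp l (x, y, z))) :=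
  ⟨fun x y z => titsNorm_titsJ l hp (x, y, z), titsJ_one_zero_zero p,
    fun x y z => titsSharp_titsJ l hp (x, y, z)⟩

/-- For `p ∈ D×` with `N_D(p) = 1`, the map `J_p : (x,y,z) ↦ (x, y p, p⁻¹ z)`
preserves the norm `N` of `J(D,λ)`, fixes the identity `(1,0,0)`, and
preserves the adjoint map; hence it is an automorphism of the cubic norm
structure. -/
theorem titsJ_p_automorphism {k : Type*} [Field k] (l : k) (hl : l ≠ 0)
    (p : Matrix (Fin 3) (Fin 3) k) (hp : p.det = 1) :
    (∀ x y z : Matrix (Fin 3) (Fin 3) k,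
        titsNorm l (x, y * p, p⁻¹ * z) = titsNorm l (x, y, z)) ∧
    ((fun v : Matrix (Fin 3) (Fin 3) k × Matrix (Fin 3) (Fin 3) k × Matrix (Fin 3) (Fin 3) k =>
        (v.1, v.2.1 * p, p⁻¹ * v.2.2)) (1, 0, 0) = (1, 0, 0)) ∧
    (∀ x y z : Matrix (Fin 3) (Fin 3) k,
        titsSharp l (x, y * p, p⁻¹ * z)
          = (fun v : Matrix (Fin 3) (Fin 3) k × Matrix (Fin 3) (Fin 3) k × Matrix (Fin 3) (Fin 3) k =>
              (v.1, v.2.1 * p, p⁻¹ * v.2.2)) (titsSharp l (x, y, z))) :=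
  titsJ_p_automorphism_general l p hp
end
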